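/- arXiv:2601.11246 — 3 statements merged into one kernel-verified Lean document; each statement's English description precedes it below -/
import Mathlib

section
/- The number of monomials z_{s_1}^{p_1} z_{s_2}^{p_2} ⋯ z_{s_l}^{p_l} with 1 ≤ s_1 < s_2 < ⋯ < s_l ≤ n, total degree p_1 + ⋯ + p_l = d, and 1 ≤ p_i < s_i − s_{i−1} for all i (with s_0 = 0) is exactly binomial(n−1, d). Equivalently, the number of sequences (s_1,…,s_l,p_1,…,p_l) of positive integers with s_1 < ⋯ < s_l ≤ n, p_1 + ⋯ + p_l = d, and p_i < s_i − s_{i−1} for each i (s_0 = 0) equals binomial(n−1, d). -/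
/-!
A pair `(s, p)` stands for the block `[s - p, s)` of `p` consecutive integers. The condition
`p' + s < s'` on consecutive pairs says that the next block starts after `s`, which therefore
separates the two blocks. So the sequences are exactly the decompositions of a `d`-subset of
`{1, …, n - 1}` into its maximal runs of consecutive integers, and `L ↦ ⋃ [sᵢ - pᵢ, sᵢ)` is a
bijection onto these subsets.
-/

open Finset

def RunRel (a b : ℕ × ℕ) : Prop := 1 ≤ b.2 ∧ b.2 + a.1 < b.1

def runUnion : List (ℕ × ℕ) → Finset ℕ
  | [] => ∅
  | (s, p) :: L => Ico (s - p) s ∪ runUnion L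

section RunUnion

variable {a b : ℕ × ℕ} {L M : List (ℕ × ℕ)} {s p x : ℕ}

theorem isChain_runRel_cons_mk_iff {q : ℕ} :
    List.IsChain RunRel ((s, p) :: L) ↔ List.IsChain RunRel ((s, q) :: L) := by
  cases L <;> simp [RunRel]

theorem lt_of_mem_runUnion (hL : List.IsChain RunRel (a :: L)) (hx : x ∈ runUnion L) :
    a.1 < x := by
  induction L generalizing a with
  | nil => simp [runUnion] at hx
  | cons c M ih =>
    obtain ⟨⟨_, hc⟩, hM⟩ := List.isChain_cons_cons.1 hL
    simp only [runUnion, mem_union, mem_Ico] at hx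
    rcases hx with hx | hx
    · omega
    · have := ih hM hx; omega

theorem lt_of_mem_runUnion_of_le (hL : ∀ q ∈ L, q.1 ≤ x) {y : ℕ} (hy : y ∈ runUnion L) :
    y < x := by
  induction L with
  | nil => simp [runUnion] at hy
  | cons c M ih =>
    simp only [runUnion, mem_union, mem_Ico] at hy
    rcases hy with hy | hy
    · have := hL c (by simp); omega
    · exact ih (fun q hq => hL q (List.mem_cons_of_mem _ hq)) hy

theorem disjoint_Ico_runUnion (hM : List.IsChain RunRel ((s, p) :: M)) :
    Disjoint (Ico (s - p) s) (runUnion M) :=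
  disjoint_left.2 fun x hx hx' => by
    have := lt_of_mem_runUnion hM hx'
    simp only [mem_Ico] at hx
    omega

theorem card_runUnion (hL : List.IsChain RunRel (a :: L)) :
    (runUnion L).card = (L.map Prod.snd).sum := by
  induction L generalizing a with
  | nil => simp [runUnion]
  | cons c M ih =>
    obtain ⟨s, p⟩ := c
    obtain ⟨⟨_, hps⟩, hM⟩ := List.isChain_cons_cons.1 hL
    rw [runUnion, card_union_of_disjoint (disjoint_Ico_runUnion hM), Nat.card_Ico, ih hM,
      List.map_cons, List.sum_cons]
    omega

theorem runUnion_eq_empty_iff (hL : List.IsChain RunRel (a :: L)) : runUnion L = ∅ ↔ L = [] := by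
  refine ⟨fun h => ?_, fun h => h ▸ rfl⟩
  cases L with
  | nil => rfl
  | cons c M =>
    have hcard := card_runUnion hL
    have hc := (List.isChain_cons_cons.1 hL).1.1
    rw [h, List.map_cons, List.sum_cons, card_empty] at hcard
    omega

theorem mem_runUnion_cons_iff_of_le (hM : List.IsChain RunRel ((s, p) :: M)) (hx : x ≤ s) :
    x ∈ runUnion ((s, p) :: M) ↔ s - p ≤ x ∧ x < s := by
  simp only [runUnion, mem_union, mem_Ico]
  refine ⟨fun h => h.resolve_right fun h' => ?_, Or.inl⟩
  have := lt_of_mem_runUnion hM h'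
  omega

theorem runUnion_tail (hM : List.IsChain RunRel ((s, p) :: M)) :
    runUnion M = runUnion ((s, p) :: M) \ Ico (s - p) s := by
  rw [runUnion, union_sdiff_cancel_left (disjoint_Ico_runUnion hM)]

theorem head_eq_of_runUnion_eq {s' p' : ℕ} {M' : List (ℕ × ℕ)}
    (hL : List.IsChain RunRel (a :: (s, p) :: M)) (hL' : List.IsChain RunRel (b :: (s', p') :: M'))
    (h : runUnion ((s, p) :: M) = runUnion ((s', p') :: M')) : s = s' ∧ p = p' := by
  wlog hss' : s ≤ s' generalizing a b s p M s' p' M'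
  · exact (this hL' hL h.symm (by omega)).imp Eq.symm Eq.symm
  obtain ⟨⟨hp, hps⟩, hM⟩ := List.isChain_cons_cons.1 hL
  obtain ⟨⟨hp', hps'⟩, hM'⟩ := List.isChain_cons_cons.1 hL'
  have key : ∀ x ≤ s, (s - p ≤ x ∧ x < s ↔ s' - p' ≤ x ∧ x < s') := fun x hx => by
    rw [← mem_runUnion_cons_iff_of_le hM hx, ← mem_runUnion_cons_iff_of_le hM' (hx.trans hss'), h]
  have h₁ := key s le_rfl
  have h₂ := key (s - p) (Nat.sub_le s p)
  have h₃ := key (s' - p')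
  omega

theorem runUnion_injective (hL : List.IsChain RunRel (a :: L))
    {L' : List (ℕ × ℕ)} (hL' : List.IsChain RunRel (b :: L')) (h : runUnion L = runUnion L') :
    L = L' := by
  induction L generalizing a b L' with
  | nil => exact ((runUnion_eq_empty_iff hL').1 h.symm).symm
  | cons c M ih =>
    cases L' with
    | nil => exact (runUnion_eq_empty_iff hL).1 h
    | cons c' M' =>
      obtain ⟨s, p⟩ := c
      obtain ⟨s', p'⟩ := c'
      obtain ⟨rfl, rfl⟩ := head_eq_of_runUnion_eq hL hL' h
      have hM := hL.tail
      have hM' := hL'.tail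
      rw [ih hM hM' (by rw [runUnion_tail hM, runUnion_tail hM', h])]

theorem exists_runUnion_eq (S : Finset ℕ) {a : ℕ × ℕ} {n : ℕ}
    (hS : ∀ x ∈ S, a.1 < x ∧ x < n) :
    ∃ L, List.IsChain RunRel (a :: L) ∧ (∀ q ∈ L, q.1 ≤ n) ∧ runUnion L = S := by
  induction S using Finset.induction_on_min generalizing a with
  | empty => exact ⟨[], List.isChain_singleton _, by simp, rfl⟩
  | insert c S hcS ih =>
    have hc := hS c (mem_insert_self c S)
    have hSn : ∀ x ∈ S, x < n := fun x hx => (hS x (mem_insert_of_mem hx)).2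
    by_cases hc1 : c + 1 ∈ S
    · -- `c` extends the first block of `S` downwards
      obtain ⟨L, hL, hLn, rfl⟩ := ih (a := (c, 0)) fun x hx => ⟨hcS x hx, hSn x hx⟩
      cases L with
      | nil => simp [runUnion] at hc1
      | cons q M =>
        obtain ⟨s, p⟩ := q
        obtain ⟨⟨hp, hps⟩, hM⟩ := List.isChain_cons_cons.1 hL
        have hsp : s - p = c + 1 := by
          simp only [runUnion, mem_union, mem_Ico] at hc1
          rcases hc1 with h | h
          · omega
          · have := lt_of_mem_runUnion hM h; omega
        refine ⟨(s, p + 1) :: M, List.isChain_cons_cons.2 ⟨⟨by omega, by dsimp only; omega⟩,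
          isChain_runRel_cons_mk_iff.1 hM⟩, by simpa using hLn, ?_⟩
        rw [runUnion, runUnion, ← insert_union, hsp, show s - (p + 1) = c by omega,
          insert_Ico_add_one_left_eq_Ico (by omega)]
    · -- `c` is a block of its own
      obtain ⟨L, hL, hLn, rfl⟩ := ih (a := (c + 1, 1)) fun x hx => by
        have := hcS x hx
        exact ⟨lt_of_le_of_ne this (by rintro rfl; exact hc1 hx), hSn x hx⟩
      refine ⟨(c + 1, 1) :: L, List.isChain_cons_cons.2 ⟨⟨le_rfl, by omega⟩, hL⟩,
        List.forall_mem_cons.2 ⟨hc.2, hLn⟩, ?_⟩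
      rw [runUnion, Nat.add_sub_cancel, Nat.Ico_succ_singleton, insert_eq]

end RunUnion

def runChains (a : ℕ × ℕ) (n d : ℕ) : Set (List (ℕ × ℕ)) :=
  {L | List.IsChain RunRel (a :: L) ∧ (∀ q ∈ L, q.1 ≤ n) ∧ (L.map Prod.snd).sum = d}

theorem injOn_runUnion_runChains (a : ℕ × ℕ) (n d : ℕ) : Set.InjOn runUnion (runChains a n d) :=
  fun _ hL _ hL' h => runUnion_injective hL.1 hL'.1 h

theorem runUnion_image_runChains (a : ℕ × ℕ) (n d : ℕ) :
    runUnion '' runChains a n d = (powersetCard d (Ioo a.1 n) : Set (Finset ℕ)) := by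
  ext S
  simp only [runChains, Set.mem_image, mem_coe, mem_powersetCard]
  constructor
  · rintro ⟨L, ⟨hL, hLn, rfl⟩, rfl⟩
    exact ⟨fun x hx => mem_Ioo.2 ⟨lt_of_mem_runUnion hL hx, lt_of_mem_runUnion_of_le hLn hx⟩,
      card_runUnion hL⟩
  · rintro ⟨hS, rfl⟩
    obtain ⟨L, hL, hLn, rfl⟩ := exists_runUnion_eq S fun x hx => mem_Ioo.1 (hS hx)
    exact ⟨L, ⟨hL, hLn, (card_runUnion hL).symm⟩, rfl⟩

theorem ncard_runChains (a : ℕ × ℕ) (n d : ℕ) :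
    (runChains a n d).ncard = (n - a.1 - 1).choose d := by
  rw [← (injOn_runUnion_runChains a n d).ncard_image, runUnion_image_runChains,
    Set.ncard_coe_finset, card_powersetCard, Nat.card_Ioo]

theorem stmt0_general (n d : ℕ) :
    Set.ncard {L : List (ℕ × ℕ) |
      List.Chain (fun a b : ℕ × ℕ => 1 ≤ b.2 ∧ b.2 + a.1 < b.1) (0, 0) L ∧
      (∀ x ∈ L, x.1 ≤ n) ∧ (L.map Prod.snd).sum = d}
    = Nat.choose (n - 1) d := by
  exact ncard_runChains (0, 0) n d

/-- The number of sequences `(s₁,…,s_l,p₁,…,p_l)` of positive integers with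
`s₁ < ⋯ < s_l ≤ n`, `p₁ + ⋯ + p_l = d`, and `pᵢ < sᵢ − s_{i−1}` for each `i`
(with `s₀ = 0`) equals `(n−1).choose d`. A sequence is encoded as a list of
pairs `(sᵢ, pᵢ)`; the chain condition (with initial element `(0,0)`) states that
for consecutive pairs `(s, p)`, `(s', p')` we have `1 ≤ p'` and `p' < s' − s`. -/
theorem stmt0 (n d : ℕ) (hd : d ≤ n - 1) :
    Set.ncard {L : List (ℕ × ℕ) |
      List.Chain (fun a b : ℕ × ℕ => 1 ≤ b.2 ∧ b.2 + a.1 < b.1) (0, 0) L ∧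
      (∀ x ∈ L, x.1 ≤ n) ∧ (L.map Prod.snd).sum = d}
    = Nat.choose (n - 1) d :=
  stmt0_general n d
end

section
/- There is a bijection between the set of d-element subsets of {1,…,n−1} and the set of sequences (s_1,…,s_l,p_1,…,p_l) with 1 ≤ s_1 < ⋯ < s_l ≤ n, p_1 + ⋯ + p_l = d, and 1 ≤ p_i < s_i − s_{i−1} (with s_0 = 0), given as follows: decompose a subset S ⊆ {1,…,n−1} of size d as a disjoint union of maximal intervals I_1 ⊔ ⋯ ⊔ I_l of consecutive integers with I_j = {a_j,…,b_j} and b_j + 1 < a_{j+1}; map S to the sequence with s_j = b_j + 1 and p_j = |I_j|. -/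
namespace Stmt1Aux

abbrev R : ℕ × ℕ → ℕ × ℕ → Prop := fun a b => 1 ≤ b.2 ∧ b.2 + a.1 < b.1

def f (L : List (ℕ × ℕ)) : Finset ℕ :=
  L.foldr (fun sp acc => Finset.Ico (sp.1 - sp.2) sp.1 ∪ acc) (∅ : Finset ℕ)

lemma f_gt (h : ℕ × ℕ) (L : List (ℕ × ℕ)) (hc : List.Chain R h L) :
    ∀ x ∈ f L, h.1 < x := by
  induction L generalizing h with
  | nil => simp [f]
  | cons sp L ih =>
    obtain ⟨⟨hp1, hps⟩, hc'⟩ := List.chain_cons.mp hc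
    intro x hx
    simp only [f, List.foldr_cons, Finset.mem_union, Finset.mem_Ico] at hx
    rcases hx with ⟨hx1, hx2⟩ | hx
    · omega
    · have := ih sp hc' x hx
      omega

lemma f_lt (n : ℕ) (L : List (ℕ × ℕ)) (hb : ∀ sp ∈ L, sp.1 ≤ n) :
    ∀ x ∈ f L, x < n := by
  induction L with
  | nil => simp [f]
  | cons sp L ih =>
    intro x hx
    simp only [f, List.foldr_cons, Finset.mem_union, Finset.mem_Ico] at hx
    rcases hx with ⟨hx1, hx2⟩ | hx
    · have := hb sp (by simp); omega
    · exact ih (fun q hq => hb q (by simp [hq])) x hx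

lemma card_f (h : ℕ × ℕ) (L : List (ℕ × ℕ)) (hc : List.Chain R h L) :
    (f L).card = (L.map Prod.snd).sum := by
  induction L generalizing h with
  | nil => simp [f]
  | cons sp L ih =>
    obtain ⟨⟨hp1, hps⟩, hc'⟩ := List.chain_cons.mp hc
    have hgt := f_gt sp L hc'
    have hdisj : Disjoint (Finset.Ico (sp.1 - sp.2) sp.1) (f L) := by
      rw [Finset.disjoint_left]
      intro x hx hx'
      have := hgt x hx'
      simp only [Finset.mem_Ico] at hx
      omega
    show (Finset.Ico (sp.1 - sp.2) sp.1 ∪ f L).card = _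
    rw [Finset.card_union_of_disjoint hdisj, ih sp hc']
    simp
    omega

lemma bendEx (S : Finset ℕ) (h : S.Nonempty) : ∃ c, S.min' h ≤ c ∧ c ∉ S :=
  ⟨S.max' h + 1, (S.min'_le _ (S.max'_mem h)).trans (Nat.le_succ _),
    fun hc => absurd (S.le_max' _ hc) (by omega)⟩

/-- End of the first maximal block: least `c ≥ min S` with `c ∉ S`. -/
def bend (S : Finset ℕ) (h : S.Nonempty) : ℕ := Nat.find (bendEx S h)

lemma bend_spec (S : Finset ℕ) (h : S.Nonempty) :
    S.min' h ≤ bend S h ∧ bend S h ∉ S := Nat.find_spec (bendEx S h)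

lemma bend_mem (S : Finset ℕ) (h : S.Nonempty) {m : ℕ}
    (h1 : S.min' h ≤ m) (h2 : m < bend S h) : m ∈ S := by
  have := Nat.find_min (bendEx S h) h2
  simp only [not_and, not_not] at this
  exact this h1

lemma bend_gt_min (S : Finset ℕ) (h : S.Nonempty) : S.min' h < bend S h := by
  have h1 := (bend_spec S h).1
  have h2 := (bend_spec S h).2
  have := S.min'_mem h
  rcases h1.lt_or_eq with h | h
  · exact h
  · exact absurd (h ▸ this) h2

lemma bend_le (S : Finset ℕ) (h : S.Nonempty) (m : ℕ) (hm : ∀ x ∈ S, x ≤ m) :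
    bend S h ≤ m + 1 :=
  Nat.find_le ⟨(S.min'_le _ (S.max'_mem h)).trans (by have := hm _ (S.max'_mem h); omega),
    fun hc => by have := hm _ hc; omega⟩

lemma bend_eq (S : Finset ℕ) (h : S.Nonempty) (c : ℕ) (h1 : S.min' h ≤ c)
    (h2 : c ∉ S) (h3 : ∀ m, S.min' h ≤ m → m < c → m ∈ S) : bend S h = c := by
  rcases lt_trichotomy (bend S h) c with hlt | heq | hgt
  · exact absurd (h3 _ (bend_spec S h).1 hlt) (bend_spec S h).2
  · exact heq
  · exact absurd (bend_mem S h h1 hgt) h2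

lemma filter_ssubset (S : Finset ℕ) (h : S.Nonempty) :
    S.filter (fun x => bend S h < x) ⊂ S := by
  refine ⟨Finset.filter_subset _ _, fun hsub => ?_⟩
  have h2 := hsub (S.min'_mem h)
  simp only [Finset.mem_filter] at h2
  have := (bend_spec S h).1
  omega

lemma decomp (S : Finset ℕ) (h : S.Nonempty) :
    S = Finset.Ico (S.min' h) (bend S h) ∪ S.filter (fun x => bend S h < x) := by
  ext x
  simp only [Finset.mem_union, Finset.mem_Ico, Finset.mem_filter]
  constructor
  · intro hx
    have h1 := S.min'_le x hx
    have h2 := (bend_spec S h).2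
    rcases lt_trichotomy x (bend S h) with hlt | heq | hgt
    · exact Or.inl ⟨h1, hlt⟩
    · exact absurd (heq ▸ hx) h2
    · exact Or.inr ⟨hx, hgt⟩
  · rintro (⟨h1, h2⟩ | ⟨hx, _⟩)
    · exact bend_mem S h h1 h2
    · exact hx

/-- The inverse map: decompose a finite set into maximal blocks. -/
def g (S : Finset ℕ) : List (ℕ × ℕ) :=
  if h : S.Nonempty then
    have := Finset.card_lt_card (filter_ssubset S h)
    (bend S h, bend S h - S.min' h) :: g (S.filter (fun x => bend S h < x))
  else []
termination_by S.card

lemma g_empty : g ∅ = [] := by unfold g; simp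

lemma g_eq (S : Finset ℕ) (h : S.Nonempty) :
    g S = (bend S h, bend S h - S.min' h) :: g (S.filter (fun x => bend S h < x)) := by
  conv_lhs => unfold g
  simp [h]

lemma g_chain (t p0 : ℕ) (S : Finset ℕ) (ht : ∀ x ∈ S, t < x) :
    List.Chain R (t, p0) (g S) := by
  induction S using Finset.strongInduction generalizing t p0 with
  | _ S ih =>
    by_cases h : S.Nonempty
    · rw [g_eq S h]
      have h1 := bend_gt_min S h
      have h2 := ht _ (S.min'_mem h)
      refine List.chain_cons.mpr ⟨⟨by omega, by simp; omega⟩, ?_⟩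
      exact ih _ (filter_ssubset S h) _ _ (fun x hx => (Finset.mem_filter.mp hx).2)
    · rw [Finset.not_nonempty_iff_eq_empty] at h
      subst h; rw [g_empty]; exact List.Chain.nil

lemma g_le (S : Finset ℕ) (m : ℕ) (hm : ∀ x ∈ S, x ≤ m) :
    ∀ sp ∈ g S, sp.1 ≤ m + 1 := by
  induction S using Finset.strongInduction with
  | _ S ih =>
    by_cases h : S.Nonempty
    · rw [g_eq S h]
      intro sp hsp
      rcases List.mem_cons.mp hsp with hsp | hsp
      · subst hsp; exact bend_le S h m hm
      · exact ih _ (filter_ssubset S h)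
          (fun x hx => hm x (Finset.filter_subset _ _ hx)) sp hsp
    · rw [Finset.not_nonempty_iff_eq_empty] at h
      subst h; rw [g_empty]; simp

lemma g_sum (S : Finset ℕ) : ((g S).map Prod.snd).sum = S.card := by
  induction S using Finset.strongInduction with
  | _ S ih =>
    by_cases h : S.Nonempty
    · rw [g_eq S h]
      simp only [List.map_cons, List.sum_cons]
      rw [ih _ (filter_ssubset S h)]
      conv_rhs => rw [decomp S h]
      rw [Finset.card_union_of_disjoint]
      · have := bend_gt_min S h
        rw [Nat.card_Ico]
      · rw [Finset.disjoint_left]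
        intro x hx hx'
        simp only [Finset.mem_Ico] at hx
        simp only [Finset.mem_filter] at hx'
        omega
    · rw [Finset.not_nonempty_iff_eq_empty] at h
      subst h; rw [g_empty]; simp

lemma f_g (S : Finset ℕ) : f (g S) = S := by
  induction S using Finset.strongInduction with
  | _ S ih =>
    by_cases h : S.Nonempty
    · rw [g_eq S h]
      show Finset.Ico (bend S h - (bend S h - S.min' h)) (bend S h) ∪ f (g _) = S
      rw [ih _ (filter_ssubset S h)]
      have h1 := (bend_spec S h).1
      rw [Nat.sub_sub_self h1]
      exact (decomp S h).symm
    · rw [Finset.not_nonempty_iff_eq_empty] at h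
      subst h; rw [g_empty]; rfl

lemma g_f (h : ℕ × ℕ) (L : List (ℕ × ℕ)) (hc : List.Chain R h L) : g (f L) = L := by
  induction L generalizing h with
  | nil => show g ∅ = []; exact g_empty
  | cons sp L ih =>
    obtain ⟨⟨hp1, hps⟩, hc'⟩ := List.chain_cons.mp hc
    obtain ⟨s, p⟩ := sp
    simp only at hp1 hps
    have hgt := f_gt (s, p) L hc'
    have hps' : p < s := by omega
    have hT : f ((s, p) :: L) = Finset.Ico (s - p) s ∪ f L := rfl
    have hmemsp : s - p ∈ f ((s, p) :: L) := by
      rw [hT]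
      simp only [Finset.mem_union, Finset.mem_Ico]
      omega
    have hne : (f ((s, p) :: L)).Nonempty := ⟨_, hmemsp⟩
    have hmin : (f ((s, p) :: L)).min' hne = s - p := by
      refine le_antisymm (Finset.min'_le _ _ hmemsp) (Finset.le_min' _ _ _ ?_)
      intro y hy
      rw [hT] at hy
      simp only [Finset.mem_union, Finset.mem_Ico] at hy
      rcases hy with ⟨h1, _⟩ | hy
      · exact h1
      · have := hgt y hy; omega
    have hbend : bend (f ((s, p) :: L)) hne = s := by
      apply bend_eq
      · rw [hmin]; omega
      · rw [hT]
        simp only [Finset.mem_union, Finset.mem_Ico]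
        push_neg
        exact ⟨fun _ => le_refl s, fun hy => absurd (hgt s hy) (lt_irrefl s)⟩
      · intro m h1 h2
        rw [hmin] at h1
        rw [hT]
        simp only [Finset.mem_union, Finset.mem_Ico]
        exact Or.inl ⟨h1, h2⟩
    have hfilter : (f ((s, p) :: L)).filter (fun x => s < x) = f L := by
      ext x
      simp only [Finset.mem_filter, hT, Finset.mem_union, Finset.mem_Ico]
      constructor
      · rintro ⟨hx | hx, hsx⟩
        · omega
        · exact hx
      · intro hx
        exact ⟨Or.inr hx, hgt x hx⟩
    rw [g_eq _ hne, hbend, hmin, hfilter, Nat.sub_sub_self (by omega), ih _ hc']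

end Stmt1Aux

/-- The map sending a sequence `(s₁,…,s_l,p₁,…,p_l)` (encoded as a list of pairs,
with `1 ≤ s₁ < ⋯ < s_l ≤ n`, `p₁+⋯+p_l = d`, `1 ≤ pᵢ < sᵢ − s_{i−1}`, `s₀ = 0`)
to the union of the intervals `{sⱼ − pⱼ, …, sⱼ − 1}` is a bijection onto the set of
`d`-element subsets of `{1,…,n−1}`.  This is the inverse of the bijection decomposing
a subset into maximal intervals `Iⱼ = {aⱼ,…,bⱼ}` and setting `sⱼ = bⱼ + 1`, `pⱼ = |Iⱼ|`. -/
theorem stmt1 (n d : ℕ) (hn : 1 ≤ n) (hd : d ≤ n - 1) :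
    Set.BijOn
      (fun L : List (ℕ × ℕ) =>
        L.foldr (fun sp acc => Finset.Ico (sp.1 - sp.2) sp.1 ∪ acc) (∅ : Finset ℕ))
      {L : List (ℕ × ℕ) |
        List.Chain (fun a b : ℕ × ℕ => 1 ≤ b.2 ∧ b.2 + a.1 < b.1) (0, 0) L ∧
        (∀ x ∈ L, x.1 ≤ n) ∧ (L.map Prod.snd).sum = d}
      {S : Finset ℕ | S ⊆ Finset.Icc 1 (n - 1) ∧ S.card = d} := by
  refine Set.InvOn.bijOn (f' := Stmt1Aux.g) ⟨?_, ?_⟩ ?_ ?_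
  · intro L hL
    exact Stmt1Aux.g_f (0, 0) L hL.1
  · intro S _
    exact Stmt1Aux.f_g S
  · intro L hL
    obtain ⟨hc, hb, hs⟩ := hL
    constructor
    · intro x hx
      have h1 := Stmt1Aux.f_gt (0, 0) L hc x hx
      have h2 := Stmt1Aux.f_lt n L hb x hx
      simp only [Finset.mem_Icc]
      omega
    · show (Stmt1Aux.f L).card = d
      rw [Stmt1Aux.card_f (0, 0) L hc, hs]
  · intro S hS
    obtain ⟨hsub, hcard⟩ := hS
    have hbound : ∀ x ∈ S, x ≤ n - 1 := fun x hx => (Finset.mem_Icc.mp (hsub hx)).2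
    have hpos : ∀ x ∈ S, 0 < x := fun x hx => (Finset.mem_Icc.mp (hsub hx)).1
    refine ⟨Stmt1Aux.g_chain 0 0 S hpos, ?_, ?_⟩
    · intro sp hsp
      have := Stmt1Aux.g_le S (n - 1) hbound sp hsp
      omega
    · rw [Stmt1Aux.g_sum, hcard]
end

section
/- Let M be a matroid of rank r on E = [n]. For r ≤ i ≤ n, define M_i to be the matroid on E with rank function rank_{M_i}(S) = min(|S|, rank_M(S) + i − r). Then each rank_{M_i} is a matroid rank function, and for r ≤ i ≤ n−1 and j = i − r, the set {S ⊆ E : rank_{M_{i+1}}(S) − rank_{M_i}(S) = 1} equals {S ⊆ E : null_M(S) ≥ j + 1}, where null_M(S) = |S| − rank_M(S). -/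
/-- A matroid on `Fin n`, presented by its rank function satisfying the rank axioms. -/
structure RankFn (n : ℕ) where
  rk : Finset (Fin n) → ℕ
  rk_empty : rk ∅ = 0
  rk_le_card : ∀ S, rk S ≤ S.card
  rk_mono : ∀ ⦃S T : Finset (Fin n)⦄, S ⊆ T → rk S ≤ rk T
  rk_submodular : ∀ S T : Finset (Fin n), rk (S ∪ T) + rk (S ∩ T) ≤ rk S + rk T

lemma rk_union_le_add_card {n : ℕ} (M : RankFn n) (S T : Finset (Fin n)) :
    M.rk (S ∪ T) ≤ M.rk S + (T \ S).card := by
  have h := M.rk_submodular S (T \ S)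
  have h2 : S ∪ (T \ S) = S ∪ T := by
    ext x; simp [Finset.mem_union, Finset.mem_sdiff]
  rw [h2] at h
  have := M.rk_le_card (T \ S)
  omega

/-- For `r ≤ i ≤ n`, `S ↦ min |S| (rank_M S + i − r)` is a matroid rank function
(the rank function of `M_i`), and for `r ≤ i ≤ n − 1` with `j = i − r`,
`{S : rank_{M_{i+1}} S − rank_{M_i} S = 1} = {S : null_M S ≥ j + 1}`. -/
theorem stmt4 (n r : ℕ) (M : RankFn n) (hr : M.rk Finset.univ = r) :
    (∀ i : ℕ, r ≤ i → i ≤ n →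
      ∃ Mi : RankFn n, ∀ S, Mi.rk S = min S.card (M.rk S + i - r)) ∧
    (∀ i : ℕ, r ≤ i → i ≤ n - 1 →
      {S : Finset (Fin n) |
          min S.card (M.rk S + (i + 1) - r) - min S.card (M.rk S + i - r) = 1}
        = {S : Finset (Fin n) | (i - r) + 1 ≤ S.card - M.rk S}) := by
  constructor
  · intro i hri hin
    refine ⟨⟨fun S => min S.card (M.rk S + i - r), ?_, ?_, ?_, ?_⟩, fun S => rfl⟩
    · simp [M.rk_empty]
    · intro S; exact min_le_left _ _
    · intro S T hST
      have h1 : S.card ≤ T.card := Finset.card_le_card hST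
      have h2 : M.rk S ≤ M.rk T := M.rk_mono hST
      omega
    · intro S T
      have hsub := M.rk_submodular S T
      have h1 := rk_union_le_add_card M S T
      have h2 := rk_union_le_add_card M T S
      rw [Finset.union_comm] at h2
      have h3 := M.rk_le_card (S ∩ T)
      have h4 := M.rk_le_card S
      have h5 := M.rk_le_card T
      have hc1 : (S ∪ T).card + (S ∩ T).card = S.card + T.card :=
        Finset.card_union_add_card_inter S T
      have hc2 : (S \ T).card + (S ∩ T).card = S.card :=
        Finset.card_sdiff_add_card_inter S T
      have hc3 : (T \ S).card + (T ∩ S).card = T.card :=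
        Finset.card_sdiff_add_card_inter T S
      rw [Finset.inter_comm] at hc3
      omega
  · intro i hri hin
    ext S
    have h := M.rk_le_card S
    simp only [Set.mem_setOf_eq]
    omega
end
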